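/- If H is a nontrivial module of a graph G and F is obtained from G by contracting H to a single vertex h (h adjacent to exactly those vertices of G−H having a neighbor in H), with vertex weights w_F(h) = χ_w(H) and w_F(x) = w_G(x) for x in G−H, then the weighted chromatic number of F equals the weighted chromatic number of G. -/

import Mathlib

variable {V : Type*} [Fintype V] [DecidableEq V]

/-- A stable (independent) set. -/
def IsStable (G : SimpleGraph V) (s : Set V) : Prop :=
  ∀ a ∈ s, ∀ b ∈ s, ¬ G.Adj a b

/-- A weighted coloring, given as a multiplicity function on finsets of vertices. -/
def IsWC (G : SimpleGraph V) (w : V → ℕ) (c : Finset V → ℕ) : Prop :=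
  (∀ S : Finset V, c S ≠ 0 → IsStable G (S : Set V)) ∧
  ∀ v : V, w v ≤ ∑ S : Finset V, (if v ∈ S then c S else 0)

/-- The cost of a weighted coloring. -/
def WCcost (c : Finset V → ℕ) : ℕ := ∑ S : Finset V, c S

/-- The weighted chromatic number. -/
noncomputable def chiW (G : SimpleGraph V) (w : V → ℕ) : ℕ :=
  sInf { n : ℕ | ∃ c : Finset V → ℕ, IsWC G w c ∧ n = WCcost c }

/-- A module of a graph. -/
def IsModule (G : SimpleGraph V) (H : Finset V) : Prop :=
  ∀ v ∉ H, (∀ u ∈ H, G.Adj v u) ∨ (∀ u ∈ H, ¬ G.Adj v u)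

def NontrivialModule (G : SimpleGraph V) (H : Finset V) : Prop :=
  IsModule G H ∧ 1 < H.card ∧ H.card < Fintype.card V

/-- The quotient graph f(G,H,h): `none` plays the role of the contracted vertex h. -/
def quotientGraph (G : SimpleGraph V) (H : Finset V) :
    SimpleGraph (Option {v : V // v ∉ H}) where
  Adj x y :=
    match x, y with
    | some a, some b => G.Adj a.1 b.1
    | some a, none => ∃ u ∈ H, G.Adj a.1 u
    | none, some b => ∃ u ∈ H, G.Adj b.1 u
    | none, none => False
  symm := by
    refine ⟨?_⟩
    rintro (a | a) (b | b) hab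
    · exact hab
    · exact hab
    · exact hab
    · exact hab.symm
  loopless := by
    refine ⟨?_⟩
    rintro (a | a) hab
    · exact hab
    · exact G.loopless.irrefl _ hab

/-- Weights on the quotient graph: h gets the weighted chromatic number of G[H]. -/
noncomputable def quotientWeights (G : SimpleGraph V) (w : V → ℕ) (H : Finset V) :
    Option {v : V // v ∉ H} → ℕ :=
  fun x => match x with
  | none => chiW (G.induce (H : Set V)) (fun v => w v.1)
  | some a => w a.1

def Prime' (G : SimpleGraph V) : Prop :=
  ∀ H : Finset V, IsModule G H → H.card ≤ 1 ∨ H = Finset.univ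

def IsBuoy (G : SimpleGraph V) (S : Fin 5 → Finset V) : Prop :=
  (∀ i, (S i).Nonempty) ∧
  (∀ v : V, ∃! i, v ∈ S i) ∧
  (∀ i, ∀ a ∈ S i, ∀ b ∈ S (i + 1), G.Adj a b) ∧
  (∀ i, ∀ a ∈ S i, ∀ b ∈ S (i + 2), ¬ G.Adj a b)

/-!
If `S` is stable in `G` and meets the module `H`, no vertex of `S \ H` has a neighbour in `H`,
so replacing `S ∩ H` by `h` gives a stable set of the quotient; the classes meeting `H`, cut down
to `H`, colour `G[H]`, so `h` is covered at least `χ_w(G[H])` times. Conversely, in an optimal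
colouring of the quotient the classes through `h` have total multiplicity at least `χ_w(G[H])`.
Padding an optimal colouring of `G[H]` with empty classes, its classes can be matched one for one
with those through `h` (a natural-number matrix with prescribed row and column sums), and
replacing `h` by the matched stable subset of `H` yields a colouring of `G` of the same cost.
-/

open Finset

theorem Pi.exists_eq_add_single_one {γ : Type*} [DecidableEq γ] {c : γ → ℕ} {k : γ}
    (hk : c k ≠ 0) :
    ∃ c' : γ → ℕ, c = c' + Pi.single k 1 :=
  ⟨c - Pi.single k 1, by ext i; by_cases hik : i = k <;> simp [hik]; omega⟩

theorem exists_nat_matrix_with_row_col_sums {α β : Type*} [Fintype α] [Fintype β]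
    [DecidableEq α] [DecidableEq β] (a : α → ℕ) (b : β → ℕ)
    (h : ∑ i, a i = ∑ j, b j) :
    ∃ x : α → β → ℕ, (∀ i, ∑ j, x i j = a i) ∧ ∀ j, ∑ i, x i j = b j := by
  induction hn : ∑ i, a i generalizing a b with
  | zero =>
    have ha := sum_eq_zero_iff.mp hn
    have hb := sum_eq_zero_iff.mp (h ▸ hn)
    exact ⟨0, fun i => by simp [ha i (mem_univ i)], fun j => by simp [hb j (mem_univ j)]⟩
  | succ n ih =>
    obtain ⟨i₀, -, hi₀⟩ := exists_ne_zero_of_sum_ne_zero (hn.trans_ne n.succ_ne_zero)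
    obtain ⟨j₀, -, hj₀⟩ :=
      exists_ne_zero_of_sum_ne_zero ((h ▸ hn).trans_ne n.succ_ne_zero)
    obtain ⟨a, rfl⟩ := Pi.exists_eq_add_single_one hi₀
    obtain ⟨b, rfl⟩ := Pi.exists_eq_add_single_one hj₀
    simp only [Pi.add_apply, sum_add_distrib, sum_pi_single', mem_univ, if_true] at h hn
    obtain ⟨x, hrow, hcol⟩ := ih a b (by omega) (by omega)
    refine ⟨x + Pi.single i₀ (Pi.single j₀ 1), fun i => ?_, fun j => ?_⟩
    · by_cases hi : i = i₀ <;> simp [sum_add_distrib, hrow, hi]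
    · by_cases hj : j = j₀ <;> simp [sum_add_distrib, hcol, hj, Pi.single_apply, ite_apply]

section WeightedColoring

variable {G : SimpleGraph V} {w : V → ℕ}

theorem exists_isWC_of_family {ι : Type*} [Fintype ι] (f : ι → Finset V) (m : ι → ℕ)
    (hstable : ∀ i, m i ≠ 0 → IsStable G (f i))
    (hcover : ∀ v, w v ≤ ∑ i, if v ∈ f i then m i else 0) :
    ∃ c, IsWC G w c ∧ WCcost c = ∑ i, m i := by
  refine ⟨fun S => ∑ i with f i = S, m i, ⟨fun S hS => ?_, fun v => ?_⟩,
    sum_fiberwise _ f m⟩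
  · obtain ⟨i, hi, hmi⟩ := exists_ne_zero_of_sum_ne_zero hS
    exact (mem_filter.mp hi).2 ▸ hstable i hmi
  · refine (hcover v).trans_eq ((sum_fiberwise _ f _).symm.trans (sum_congr rfl fun S _ => ?_))
    split_ifs with hv
    · exact sum_congr rfl fun i hi => if_pos ((mem_filter.mp hi).2 ▸ hv)
    · exact sum_eq_zero fun i hi => if_neg ((mem_filter.mp hi).2 ▸ hv)

theorem chiW_le_cost {c : Finset V → ℕ} (hc : IsWC G w c) : chiW G w ≤ WCcost c :=
  Nat.sInf_le ⟨c, hc, rfl⟩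

theorem chiW_le_sum_of_family {ι : Type*} [Fintype ι] (f : ι → Finset V) (m : ι → ℕ)
    (hstable : ∀ i, m i ≠ 0 → IsStable G (f i))
    (hcover : ∀ v, w v ≤ ∑ i, if v ∈ f i then m i else 0) :
    chiW G w ≤ ∑ i, m i := by
  obtain ⟨c, hc, hcost⟩ := exists_isWC_of_family f m hstable hcover
  exact hcost ▸ chiW_le_cost hc

theorem exists_isWC_cost_eq_chiW (G : SimpleGraph V) (w : V → ℕ) :
    ∃ c, IsWC G w c ∧ WCcost c = chiW G w := by
  obtain ⟨c, hc, -⟩ := exists_isWC_of_family (G := G) (w := w) (fun v => {v}) w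
    (fun v _ => by simp [IsStable]) (fun v => by simp)
  obtain ⟨c, hc, hcost⟩ :=
    Nat.sInf_mem (s := {n | ∃ c, IsWC G w c ∧ n = WCcost c}) ⟨_, c, hc, rfl⟩
  exact ⟨c, hc, hcost.symm⟩

theorem IsWC.add_empty {c : Finset V → ℕ} (hc : IsWC G w c) (k : ℕ) :
    IsWC G w fun S => c S + if S = ∅ then k else 0 := by
  refine ⟨fun S hS => ?_, fun v => (hc.2 v).trans (sum_le_sum fun S _ => ?_)⟩
  · by_cases hSe : S = ∅
    · simp [hSe, IsStable]
    · exact hc.1 S (by simpa [hSe] using hS)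
  · dsimp only
    split_ifs <;> omega

end WeightedColoring

section Quotient

variable {G : SimpleGraph V} {w : V → ℕ} {H : Finset V}

open Classical in
noncomputable def contractSet (H S : Finset V) : Finset (Option {v : V // v ∉ H}) :=
  {y | y.elim (∃ u ∈ H, u ∈ S) fun a => a.1 ∈ S}

def expandSet (H : Finset V) (T : Finset (Option {v : V // v ∉ H})) (D : Finset (H : Set V)) :
    Finset V :=
  {v | if hv : v ∈ H then ⟨v, hv⟩ ∈ D else some ⟨v, hv⟩ ∈ T}

@[simp]
theorem none_mem_contractSet {S : Finset V} :
    none ∈ contractSet H S ↔ ∃ u ∈ H, u ∈ S := by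
  simp [contractSet]

@[simp]
theorem some_mem_contractSet {S : Finset V} {a : {v : V // v ∉ H}} :
    some a ∈ contractSet H S ↔ a.1 ∈ S := by
  simp [contractSet]

theorem mem_expandSet_of_mem {T : Finset (Option {v : V // v ∉ H})} {D : Finset (H : Set V)}
    {v : V} (hv : v ∈ H) : v ∈ expandSet H T D ↔ ⟨v, hv⟩ ∈ D := by
  simp [expandSet, hv]

theorem mem_expandSet_of_notMem {T : Finset (Option {v : V // v ∉ H})} {D : Finset (H : Set V)}
    {v : V} (hv : v ∉ H) : v ∈ expandSet H T D ↔ some ⟨v, hv⟩ ∈ T := by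
  simp [expandSet, hv]

theorem isStable_contractSet (hH : IsModule G H) {S : Finset V} (hS : IsStable G S) :
    IsStable (quotientGraph G H) (contractSet H S) := by
  have hnonadj : ∀ a : {v : V // v ∉ H}, a.1 ∈ S → (∃ u ∈ H, u ∈ S) →
      ¬ ∃ u ∈ H, G.Adj a.1 u := by
    rintro a haS ⟨u, huH, huS⟩ ⟨u', hu'H, hadj⟩
    rcases hH a.1 a.2 with hall | hnone
    · exact hS a.1 haS u huS (hall u huH)
    · exact hnone u' hu'H hadj
  rintro (_ | a) ha (_ | b) hb
  · exact id
  · exact hnonadj b (by simpa using hb) (by simpa using ha)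
  · exact hnonadj a (by simpa using ha) (by simpa using hb)
  · exact hS a.1 (by simpa using ha) b.1 (by simpa using hb)

theorem isStable_expandSet {T : Finset (Option {v : V // v ∉ H})} {D : Finset (H : Set V)}
    (hT : IsStable (quotientGraph G H) T) (hD : IsStable (G.induce (H : Set V)) D)
    (hTD : none ∈ T ∨ D = ∅) :
    IsStable G (expandSet H T D) := by
  have hHT : ∀ a : {v : V // v ∉ H}, some a ∈ T →
      ∀ u (hu : u ∈ H), ⟨u, hu⟩ ∈ D → ¬ G.Adj a.1 u := by
    intro a ha u hu huD hadj
    rcases hTD with hnone | rfl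
    · exact hT (some a) ha none hnone ⟨u, hu, hadj⟩
    · simp at huD
  intro p hp q hq hadj
  simp only [Finset.mem_coe] at hp hq
  by_cases hpH : p ∈ H <;> by_cases hqH : q ∈ H
  · exact hD ⟨p, hpH⟩ ((mem_expandSet_of_mem hpH).mp hp) ⟨q, hqH⟩
      ((mem_expandSet_of_mem hqH).mp hq) hadj
  · exact hHT ⟨q, hqH⟩ ((mem_expandSet_of_notMem hqH).mp hq) p hpH
      ((mem_expandSet_of_mem hpH).mp hp) hadj.symm
  · exact hHT ⟨p, hpH⟩ ((mem_expandSet_of_notMem hpH).mp hp) q hqH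
      ((mem_expandSet_of_mem hqH).mp hq) hadj
  · exact hT _ ((mem_expandSet_of_notMem hpH).mp hp) _ ((mem_expandSet_of_notMem hqH).mp hq) hadj

theorem chiW_induce_le_sum {c : Finset V → ℕ} (hc : IsWC G w c) :
    chiW (G.induce (H : Set V)) (fun v => w v.1) ≤
      ∑ S, if ∃ u ∈ H, u ∈ S then c S else 0 := by
  refine chiW_le_sum_of_family (fun S => ({u | u.1 ∈ S} : Finset (H : Set V))) _
    (fun S hS a ha b hb => ?_) (fun u => (hc.2 u).trans_eq (sum_congr rfl fun S _ => ?_))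
  · have hcS : c S ≠ 0 := fun h => by simp [h] at hS
    exact hc.1 S hcS a.1 (by simpa using ha) b.1 (by simpa using hb)
  · by_cases huS : u.1 ∈ S
    · have hHS : ∃ v ∈ H, v ∈ S := ⟨u.1, u.2, huS⟩
      simp [huS, hHS]
    · simp [huS]

theorem chiW_quotient_le (hH : IsModule G H) :
    chiW (quotientGraph G H) (quotientWeights G w H) ≤ chiW G w := by
  obtain ⟨c, hc, hcost⟩ := exists_isWC_cost_eq_chiW G w
  refine (chiW_le_sum_of_family (contractSet H) c
    (fun S hS => isStable_contractSet hH (hc.1 S hS)) ?_).trans_eq hcost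
  rintro (_ | a)
  · simpa [quotientWeights] using chiW_induce_le_sum hc
  · simpa [quotientWeights] using hc.2 a.1

/-- `x T D` counts how often the class `T ∋ h` of the quotient is paired with the class `D` of
`G[H]`; each such pair becomes the class `expandSet H T D` of `G`, and the classes `T ∌ h` are
kept as `expandSet H T ∅`. -/
def mergedMult (c : Finset (Option {v : V // v ∉ H}) → ℕ)
    (x : Finset (Option {v : V // v ∉ H}) → Finset (H : Set V) → ℕ)
    (p : Finset (Option {v : V // v ∉ H}) × Finset (H : Set V)) : ℕ :=
  if none ∈ p.1 then x p.1 p.2 else if p.2 = ∅ then c p.1 else 0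

section Merge

variable {c : Finset (Option {v : V // v ∉ H}) → ℕ}
  {x : Finset (Option {v : V // v ∉ H}) → Finset (H : Set V) → ℕ}

theorem sum_mergedMult (hrow : ∀ T, ∑ D, x T D = if none ∈ T then c T else 0) :
    ∑ p, mergedMult c x p = WCcost c := by
  rw [Fintype.sum_prod_type]
  refine sum_congr rfl fun T _ => ?_
  by_cases hT : none ∈ T
  · simpa only [mergedMult, if_pos hT] using hrow T
  · simp [mergedMult, hT]

theorem isStable_expandSet_of_mergedMult_ne_zero
    (hc : IsWC (quotientGraph G H) (quotientWeights G w H) c)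
    (hx : IsWC (G.induce (H : Set V)) (fun v => w v.1) fun D => ∑ T, x T D)
    (hrow : ∀ T, ∑ D, x T D = if none ∈ T then c T else 0)
    {T : Finset (Option {v : V // v ∉ H})} {D : Finset (H : Set V)}
    (hTD : mergedMult c x (T, D) ≠ 0) :
    IsStable G (expandSet H T D) := by
  by_cases hT : none ∈ T
  · have hxTD : x T D ≠ 0 := by simpa [mergedMult, hT] using hTD
    have hcT : c T ≠ 0 := by
      have := (single_le_sum (f := x T) (fun _ _ => Nat.zero_le _) (mem_univ D)).trans_eq
        ((hrow T).trans (if_pos hT))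
      omega
    have hD : ∑ T, x T D ≠ 0 := by
      have := single_le_sum (f := fun T => x T D) (fun _ _ => Nat.zero_le _) (mem_univ T)
      omega
    exact isStable_expandSet (hc.1 T hcT) (hx.1 D hD) (Or.inl hT)
  · have hD : D = ∅ := by
      by_contra h
      simp [mergedMult, hT, h] at hTD
    have hcT : c T ≠ 0 := by simpa [mergedMult, hT, hD] using hTD
    exact isStable_expandSet (hc.1 T hcT) (by simp [hD, IsStable]) (Or.inr hD)

theorem le_sum_mergedMult
    (hc : IsWC (quotientGraph G H) (quotientWeights G w H) c)
    (hx : IsWC (G.induce (H : Set V)) (fun v => w v.1) fun D => ∑ T, x T D)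
    (hrow : ∀ T, ∑ D, x T D = if none ∈ T then c T else 0) (v : V) :
    w v ≤ ∑ p, if v ∈ expandSet H p.1 p.2 then mergedMult c x p else 0 := by
  by_cases hv : v ∈ H
  · have hx_le : ∀ T D, x T D ≤ mergedMult c x (T, D) := by
      intro T D
      by_cases hT : none ∈ T
      · simp [mergedMult, hT]
      · simp [(sum_eq_zero_iff.mp ((hrow T).trans (if_neg hT))) D (mem_univ D)]
    calc w v ≤ ∑ D, if ⟨v, hv⟩ ∈ D then ∑ T, x T D else 0 := hx.2 ⟨v, hv⟩
      _ ≤ ∑ D, if ⟨v, hv⟩ ∈ D then ∑ T, mergedMult c x (T, D) else 0 := by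
        gcongr with D
        split_ifs
        · exact sum_le_sum fun T _ => hx_le T D
        · rfl
      _ = ∑ p, if v ∈ expandSet H p.1 p.2 then mergedMult c x p else 0 := by
        rw [Fintype.sum_prod_type_right]
        refine sum_congr rfl fun D _ => ?_
        simp only [mem_expandSet_of_mem hv]
        exact ite_sum_zero _ _ _
  · have hrow' : ∀ T, ∑ D, mergedMult c x (T, D) = c T := fun T => by
      by_cases hT : none ∈ T
      · simpa only [mergedMult, if_pos hT] using hrow T
      · simp [mergedMult, hT]
    calc w v ≤ ∑ T, if some ⟨v, hv⟩ ∈ T then c T else 0 := hc.2 (some ⟨v, hv⟩)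
      _ = ∑ p, if v ∈ expandSet H p.1 p.2 then mergedMult c x p else 0 := by
        rw [Fintype.sum_prod_type]
        refine sum_congr rfl fun T _ => ?_
        simp only [mem_expandSet_of_notMem hv, ← hrow' T]
        exact ite_sum_zero _ _ _

end Merge

theorem chiW_le_quotient : chiW G w ≤ chiW (quotientGraph G H) (quotientWeights G w H) := by
  obtain ⟨c, hc, hcost⟩ := exists_isWC_cost_eq_chiW (quotientGraph G H) (quotientWeights G w H)
  obtain ⟨d, hd, hdcost⟩ := exists_isWC_cost_eq_chiW (G.induce (H : Set V)) (fun v => w v.1)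
  set M := ∑ T, if none ∈ T then c T else 0
  have hdM : WCcost d ≤ M := hdcost ▸ hc.2 none
  obtain ⟨x, hrow, hcol⟩ := exists_nat_matrix_with_row_col_sums
    (fun T => if none ∈ T then c T else 0) (fun D => d D + if D = ∅ then M - WCcost d else 0)
    (by simp only [sum_add_distrib, sum_ite_eq', mem_univ, if_true]; unfold WCcost at *; omega)
  have hx : IsWC (G.induce (H : Set V)) (fun v => w v.1) fun D => ∑ T, x T D := by
    rw [show (fun D => ∑ T, x T D) = _ from funext hcol]
    exact hd.add_empty _
  calc chiW G w ≤ ∑ p, mergedMult c x p :=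
        chiW_le_sum_of_family _ _
          (fun _ hp => isStable_expandSet_of_mergedMult_ne_zero hc hx hrow hp)
          (le_sum_mergedMult hc hx hrow)
    _ = chiW (quotientGraph G H) (quotientWeights G w H) := (sum_mergedMult hrow).trans hcost

end Quotient

/-- contracting a nontrivial module (with weight χ_w(G[H]) on the new
vertex) preserves the weighted chromatic number. -/
theorem quotient_chiW_eq (G : SimpleGraph V) (w : V → ℕ) (H : Finset V)
    (hH : NontrivialModule G H) :
    chiW (quotientGraph G H) (quotientWeights G w H) = chiW G w :=
  le_antisymm (chiW_quotient_le hH.1) chiW_le_quotient
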